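/- Let M be a compact smooth manifold and γ a closed 1-form on M which is nowhere vanishing and whose de Rham class satisfies [γ] ∈ H¹(M, ℤ) (i.e. [γ] is an integral class). Then there exists a submersion f : M → S¹ such that f*(dt) = γ, where dt is the canonical 1-form on S¹. -/

import Mathlib

/-!
Fix a base point in every connected component of `M` and let `f x = exp (2πi ∫_c γ)` for a
smooth path `c` from the base point to `x`. Two such paths differ by a loop, over which `γ`
integrates to an integer, so `f` is well defined. Near a point where `γ = dg`, joining it to nearby
points by paths inside a chart and applying the fundamental theorem of calculus gives
`f = exp (2πi (C + g))` locally. Hence `f` is smooth and pulls `dt` back to `γ`, and it is a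
submersion because `γ` vanishes nowhere.
-/

noncomputable section

open scoped Manifold ContDiff
open Set Filter Topology MeasureTheory intervalIntegral

namespace Tischler

variable {E H : Type*} [NormedAddCommGroup E] [NormedSpace ℝ E] [TopologicalSpace H]
  {I : ModelWithCorners ℝ E H} {M : Type*} [TopologicalSpace M] [ChartedSpace H M]

def lineIntegrand (γ : ∀ x : M, TangentSpace I x →L[ℝ] ℝ) (c : ℝ → M) (t : ℝ) : ℝ :=
  γ (c t) (mfderiv 𝓘(ℝ, ℝ) I c t 1)

def lineIntegral (γ : ∀ x : M, TangentSpace I x →L[ℝ] ℝ) (c : ℝ → M) : ℝ :=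
  ∫ t in (0 : ℝ)..1, lineIntegrand γ c t

def IsLocallyExact (γ : ∀ x : M, TangentSpace I x →L[ℝ] ℝ) : Prop :=
  ∀ x₀ : M, ∃ u ∈ 𝓝 x₀, ∃ g : M → ℝ, ContMDiffOn I 𝓘(ℝ, ℝ) ∞ g u ∧
    ∀ x ∈ u, (mfderiv I 𝓘(ℝ, ℝ) g x : TangentSpace I x →L[ℝ] ℝ) = γ x

variable {γ : ∀ x : M, TangentSpace I x →L[ℝ] ℝ} {c c₁ c₂ : ℝ → M}

theorem lineIntegrand_congr {t : ℝ} (h : c₁ =ᶠ[𝓝 t] c₂) :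
    lineIntegrand γ c₁ t = lineIntegrand γ c₂ t := by
  rw [lineIntegrand, lineIntegrand, h.mfderiv_eq, h.eq_of_nhds]

theorem lineIntegrand_eq_zero_of_eventuallyEq_const {t : ℝ} {y : M} (h : c =ᶠ[𝓝 t] fun _ ↦ y) :
    lineIntegrand γ c t = 0 := by
  rw [lineIntegrand_congr h, lineIntegrand, mfderiv_const]
  exact map_zero _

theorem lineIntegrand_comp {σ : ℝ → ℝ} {t : ℝ} (hσ : DifferentiableAt ℝ σ t)
    (hc : MDifferentiableAt 𝓘(ℝ, ℝ) I c (σ t)) :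
    lineIntegrand γ (c ∘ σ) t = deriv σ t * lineIntegrand γ c (σ t) := by
  have hσ' : mfderiv 𝓘(ℝ, ℝ) 𝓘(ℝ, ℝ) σ t 1 = deriv σ t • (1 : TangentSpace 𝓘(ℝ, ℝ) (σ t)) := by
    rw [mfderiv_eq_fderiv]
    exact (mul_one (deriv σ t)).symm
  rw [lineIntegrand, mfderiv_comp t hc hσ.mdifferentiableAt, ContinuousLinearMap.comp_apply, hσ',
    map_smul, map_smul, smul_eq_mul]
  rfl

theorem hasDerivAt_comp_of_mfderiv_eq {g : M → ℝ} {t : ℝ}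
    (hg : MDifferentiableAt I 𝓘(ℝ, ℝ) g (c t))
    (hgγ : (mfderiv I 𝓘(ℝ, ℝ) g (c t) : TangentSpace I (c t) →L[ℝ] ℝ) = γ (c t))
    (hc : MDifferentiableAt 𝓘(ℝ, ℝ) I c t) :
    HasDerivAt (g ∘ c) (lineIntegrand γ c t) t := by
  have hd : DifferentiableAt ℝ (g ∘ c) t :=
    mdifferentiableAt_iff_differentiableAt.1 (hg.comp t hc)
  have h : fderiv ℝ (g ∘ c) t 1 = lineIntegrand γ c t := by
    rw [← mfderiv_eq_fderiv, mfderiv_comp t hg hc]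
    change mfderiv I 𝓘(ℝ, ℝ) g (c t) (mfderiv 𝓘(ℝ, ℝ) I c t 1) = _
    rw [hgγ]
    rfl
  simpa only [h] using hd.hasFDerivAt.hasDerivAt

theorem continuous_lineIntegrand (hγ : IsLocallyExact γ) (hc : ContMDiff 𝓘(ℝ, ℝ) I 1 c) :
    Continuous (lineIntegrand γ c) := by
  refine continuous_iff_continuousAt.2 fun t ↦ ?_
  obtain ⟨u, hu, g, hg, hgγ⟩ := hγ (c t)
  set s := c ⁻¹' interior u
  have hs : IsOpen s := isOpen_interior.preimage hc.continuous
  have hderiv : ∀ τ ∈ s, HasDerivAt (g ∘ c) (lineIntegrand γ c τ) τ := fun τ hτ ↦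
    hasDerivAt_comp_of_mfderiv_eq
      ((hg.contMDiffAt (mem_interior_iff_mem_nhds.1 hτ)).mdifferentiableAt (by simp))
      (hgγ _ (interior_subset hτ)) ((hc τ).mdifferentiableAt one_ne_zero)
  have hgc : ContDiffOn ℝ 1 (g ∘ c) s :=
    ((hg.mono interior_subset).of_le (by simp) |>.comp hc.contMDiffOn fun _ h ↦ h).contDiffOn
  refine ((hgc.continuousOn_deriv_of_isOpen hs le_rfl).continuousAt
    (hs.mem_nhds (mem_interior_iff_mem_nhds.2 hu))).congr ?_
  filter_upwards [hs.mem_nhds (mem_interior_iff_mem_nhds.2 hu)] with τ hτ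
  exact (hderiv τ hτ).deriv

theorem integral_lineIntegrand_eq_sub (hγ : IsLocallyExact γ) {g : M → ℝ} {u : Set M}
    (hu : IsOpen u) (hg : ContMDiffOn I 𝓘(ℝ, ℝ) 1 g u)
    (hgγ : ∀ x ∈ u, (mfderiv I 𝓘(ℝ, ℝ) g x : TangentSpace I x →L[ℝ] ℝ) = γ x)
    (hc : ContMDiff 𝓘(ℝ, ℝ) I 1 c) {a b : ℝ} (hab : ∀ t ∈ uIcc a b, c t ∈ u) :
    ∫ t in a..b, lineIntegrand γ c t = g (c b) - g (c a) :=
  integral_eq_sub_of_hasDerivAt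
    (fun t ht ↦ hasDerivAt_comp_of_mfderiv_eq
      ((hg.contMDiffAt (hu.mem_nhds (hab t ht))).mdifferentiableAt one_ne_zero)
      (hgγ _ (hab t ht)) ((hc t).mdifferentiableAt one_ne_zero))
    ((continuous_lineIntegrand hγ hc).intervalIntegrable a b)

theorem integral_lineIntegrand_comp (hγ : IsLocallyExact γ) (hc : ContMDiff 𝓘(ℝ, ℝ) I 1 c)
    {σ : ℝ → ℝ} (hσ : ContDiff ℝ 1 σ) (a b : ℝ) :
    ∫ t in a..b, lineIntegrand γ (c ∘ σ) t = ∫ t in σ a..σ b, lineIntegrand γ c t := by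
  rw [← integral_comp_mul_deriv (fun t _ ↦ (hσ.differentiable one_ne_zero t).hasDerivAt)
    (hσ.continuous_deriv le_rfl).continuousOn (continuous_lineIntegrand hγ hc)]
  refine integral_congr fun t _ ↦ ?_
  rw [lineIntegrand_comp (hσ.differentiable one_ne_zero t) ((hc _).mdifferentiableAt one_ne_zero),
    mul_comm]
  rfl

-- Paths are constant outside `[0, 1]`, so that concatenations and reparametrisations stay smooth.
structure IsSmoothPath (I : ModelWithCorners ℝ E H) (x y : M) (c : ℝ → M) : Prop where
  contMDiff : ContMDiff 𝓘(ℝ, ℝ) I ∞ c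
  eq_left : ∀ t ≤ 0, c t = x
  eq_right : ∀ t, 1 ≤ t → c t = y

-- On `[1/3, 2/3]` both branches sit at the junction point, so they overlap on an open set.
def pathTrans (c₁ c₂ : ℝ → M) : ℝ → M :=
  fun t ↦ if t ≤ 1 / 2 then c₁ (3 * t) else c₂ (3 * t - 2)

def pathSymm (c : ℝ → M) : ℝ → M := fun t ↦ c (1 - t)

namespace IsSmoothPath

variable {x y z : M}

theorem refl (x : M) : IsSmoothPath I x x fun _ ↦ x :=
  ⟨contMDiff_const, fun _ _ ↦ rfl, fun _ _ ↦ rfl⟩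

theorem lineIntegrand_eq_zero (h : IsSmoothPath I x y c) {t : ℝ} (ht : t ∉ Icc 0 1) :
    lineIntegrand γ c t = 0 := by
  rw [mem_Icc, not_and_or, not_le, not_le] at ht
  rcases ht with ht | ht
  · exact lineIntegrand_eq_zero_of_eventuallyEq_const (y := x)
      (eventually_of_mem (Iio_mem_nhds ht) fun s hs ↦ h.eq_left s (le_of_lt hs))
  · exact lineIntegrand_eq_zero_of_eventuallyEq_const (y := y)
      (eventually_of_mem (Ioi_mem_nhds ht) fun s hs ↦ h.eq_right s (le_of_lt hs))

theorem integral_lineIntegrand (hγ : IsLocallyExact γ) (h : IsSmoothPath I x y c) {a b : ℝ}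
    (ha : a ≤ 0) (hb : 1 ≤ b) : ∫ t in a..b, lineIntegrand γ c t = lineIntegral γ c := by
  have hint (a b : ℝ) : IntervalIntegrable (lineIntegrand γ c) volume a b :=
    (continuous_lineIntegrand hγ (h.contMDiff.of_le (by simp))).intervalIntegrable a b
  have hleft : ∫ t in a..0, lineIntegrand γ c t = 0 := by
    rw [integral_congr_uIoo (g := fun _ ↦ 0), intervalIntegral.integral_zero]
    intro t ht
    rw [uIoo_of_le ha] at ht
    exact h.lineIntegrand_eq_zero fun h0 ↦ ht.2.not_ge h0.1
  have hright : ∫ t in (1 : ℝ)..b, lineIntegrand γ c t = 0 := by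
    rw [integral_congr_uIoo (g := fun _ ↦ 0), intervalIntegral.integral_zero]
    intro t ht
    rw [uIoo_of_le hb] at ht
    exact h.lineIntegrand_eq_zero fun h1 ↦ ht.1.not_ge h1.2
  rw [← integral_add_adjacent_intervals (hint a 0) (hint 0 b),
    ← integral_add_adjacent_intervals (hint 0 1) (hint 1 b), hleft, hright, zero_add, add_zero]
  rfl

theorem pathTrans_eqOn_left (h₁ : IsSmoothPath I x y c₁) (h₂ : IsSmoothPath I y z c₂) :
    EqOn (pathTrans c₁ c₂) (c₁ ∘ (3 * ·)) (Iio (2 / 3)) := by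
  intro t ht
  by_cases h : t ≤ 1 / 2
  · simp only [pathTrans, if_pos h, Function.comp_apply]
  · rw [mem_Iio] at ht
    simp only [pathTrans, if_neg h, Function.comp_apply]
    rw [h₂.eq_left _ (by linarith), h₁.eq_right _ (by linarith)]

theorem pathTrans_eqOn_right (h₁ : IsSmoothPath I x y c₁) (h₂ : IsSmoothPath I y z c₂) :
    EqOn (pathTrans c₁ c₂) (c₂ ∘ (3 * · - 2)) (Ioi (1 / 3)) := by
  intro t ht
  by_cases h : t ≤ 1 / 2
  · rw [mem_Ioi] at ht
    simp only [pathTrans, if_pos h, Function.comp_apply]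
    rw [h₂.eq_left _ (by linarith), h₁.eq_right _ (by linarith)]
  · simp only [pathTrans, if_neg h, Function.comp_apply]

theorem trans (h₁ : IsSmoothPath I x y c₁) (h₂ : IsSmoothPath I y z c₂) :
    IsSmoothPath I x z (pathTrans c₁ c₂) where
  contMDiff t := by
    rcases lt_or_ge t (2 / 3) with ht | ht
    · exact (h₁.contMDiff.comp (contDiff_const.mul contDiff_id).contMDiff t).congr_of_eventuallyEq
        (eventually_of_mem (Iio_mem_nhds ht) (h₁.pathTrans_eqOn_left h₂))
    · exact (h₂.contMDiff.comp ((contDiff_const.mul contDiff_id).sub contDiff_const).contMDiff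
        t).congr_of_eventuallyEq
        (eventually_of_mem (Ioi_mem_nhds (by linarith)) (h₁.pathTrans_eqOn_right h₂))
  eq_left t ht := by
    rw [pathTrans, if_pos (by linarith), h₁.eq_left _ (by linarith)]
  eq_right t ht := by
    rw [pathTrans, if_neg (by linarith), h₂.eq_right _ (by linarith)]

theorem symm (h : IsSmoothPath I x y c) : IsSmoothPath I y x (pathSymm c) where
  contMDiff := h.contMDiff.comp (contDiff_const.sub contDiff_id).contMDiff
  eq_left t ht := h.eq_right _ (by linarith)
  eq_right t ht := h.eq_left _ (by linarith)

theorem lineIntegral_trans (hγ : IsLocallyExact γ) (h₁ : IsSmoothPath I x y c₁)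
    (h₂ : IsSmoothPath I y z c₂) :
    lineIntegral γ (pathTrans c₁ c₂) = lineIntegral γ c₁ + lineIntegral γ c₂ := by
  have hint (a b : ℝ) : IntervalIntegrable (lineIntegrand γ (pathTrans c₁ c₂)) volume a b :=
    (continuous_lineIntegrand hγ ((h₁.trans h₂).contMDiff.of_le (by simp))).intervalIntegrable a b
  have hleft : ∫ t in (0 : ℝ)..1 / 2, lineIntegrand γ (pathTrans c₁ c₂) t = lineIntegral γ c₁ :=
    calc _ = ∫ t in (0 : ℝ)..1 / 2, lineIntegrand γ (c₁ ∘ (3 * ·)) t := by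
          refine integral_congr_uIoo fun t ht ↦ lineIntegrand_congr ?_
          rw [uIoo_of_le (by norm_num)] at ht
          exact eventually_of_mem (Iio_mem_nhds (by linarith [ht.2])) (h₁.pathTrans_eqOn_left h₂)
      _ = ∫ t in 3 * 0..3 * (1 / 2), lineIntegrand γ c₁ t :=
          integral_lineIntegrand_comp hγ (h₁.contMDiff.of_le (by simp))
            (contDiff_const.mul contDiff_id) 0 (1 / 2)
      _ = lineIntegral γ c₁ := h₁.integral_lineIntegrand hγ (by norm_num) (by norm_num)
  have hright : ∫ t in (1 / 2 : ℝ)..1, lineIntegrand γ (pathTrans c₁ c₂) t = lineIntegral γ c₂ :=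
    calc _ = ∫ t in (1 / 2 : ℝ)..1, lineIntegrand γ (c₂ ∘ (3 * · - 2)) t := by
          refine integral_congr_uIoo fun t ht ↦ lineIntegrand_congr ?_
          rw [uIoo_of_le (by norm_num)] at ht
          exact eventually_of_mem (Ioi_mem_nhds (by linarith [ht.1])) (h₁.pathTrans_eqOn_right h₂)
      _ = ∫ t in 3 * (1 / 2) - 2..3 * 1 - 2, lineIntegrand γ c₂ t :=
          integral_lineIntegrand_comp hγ (h₂.contMDiff.of_le (by simp))
            ((contDiff_const.mul contDiff_id).sub contDiff_const) (1 / 2) 1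
      _ = lineIntegral γ c₂ := h₂.integral_lineIntegrand hγ (by norm_num) (by norm_num)
  rw [lineIntegral, ← integral_add_adjacent_intervals (hint 0 (1 / 2)) (hint (1 / 2) 1), hleft,
    hright]

theorem lineIntegral_symm (hγ : IsLocallyExact γ) (h : IsSmoothPath I x y c) :
    lineIntegral γ (pathSymm c) = -lineIntegral γ c := by
  rw [lineIntegral, show pathSymm c = c ∘ (1 - ·) from rfl,
    integral_lineIntegrand_comp hγ (h.contMDiff.of_le (by simp)) (σ := (1 - ·))
      (contDiff_const.sub contDiff_id), sub_zero, sub_self, integral_symm]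
  rfl

end IsSmoothPath

def HasIntegralPeriods (γ : ∀ x : M, TangentSpace I x →L[ℝ] ℝ) : Prop :=
  ∀ c : ℝ → M, ContMDiff 𝓘(ℝ, ℝ) I ∞ c → Function.Periodic c 1 → ∃ k : ℤ, lineIntegral γ c = k

theorem contMDiff_comp_fract {n : WithTop ℕ∞} {x : M} (hc : ContMDiff 𝓘(ℝ, ℝ) I n c)
    (hx : ∀ t ∉ Ioo (1 / 3 : ℝ) (2 / 3), c t = x) : ContMDiff 𝓘(ℝ, ℝ) I n (c ∘ Int.fract) := by
  have hshift (k : ℤ) : EqOn (c ∘ Int.fract) (c ∘ (· - k)) (Ioo (k - 1 / 3) (k + 1)) := by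
    intro s hs
    rcases lt_or_ge s k with hsk | hsk
    · have hfract : Int.fract s = s - k + 1 :=
        Int.fract_eq_iff.2 ⟨by linarith [hs.1], by linarith, k - 1, by push_cast; ring⟩
      simp only [Function.comp_apply, hfract]
      rw [hx _ fun h ↦ by linarith [h.2, hs.1], hx _ fun h ↦ by linarith [h.1]]
    · have hfract : Int.fract s = s - k :=
        Int.fract_eq_iff.2 ⟨by linarith, by linarith [hs.2], k, by ring⟩
      simp only [Function.comp_apply, hfract]
  intro t
  have ht : t ∈ Ioo ((⌊t + 1 / 6⌋ : ℤ) - 1 / 3 : ℝ) (⌊t + 1 / 6⌋ + 1) :=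
    ⟨by linarith [Int.floor_le (t + 1 / 6)], by linarith [Int.lt_floor_add_one (t + 1 / 6)]⟩
  exact ((hc.comp (contDiff_id.sub contDiff_const).contMDiff) t).congr_of_eventuallyEq
    (eventually_of_mem (isOpen_Ioo.mem_nhds ht) (hshift _))

theorem IsSmoothPath.exists_int_lineIntegral_eq {x : M} {d : ℝ → M} (hγ : IsLocallyExact γ)
    (hper : HasIntegralPeriods γ) (hd : IsSmoothPath I x x d) : ∃ k : ℤ, lineIntegral γ d = k := by
  -- After reparametrising by `φ` the loop is constant near `0` and `1`, so its periodic extension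
  -- is smooth.
  set φ : ℝ → ℝ := fun t ↦ Real.smoothTransition (3 * t - 1)
  have hφ : ContDiff ℝ ∞ φ :=
    Real.smoothTransition.contDiff.comp ((contDiff_const.mul contDiff_id).sub contDiff_const)
  have hφ0 : φ 0 = 0 := Real.smoothTransition.zero_of_nonpos (by norm_num)
  have hφ1 : φ 1 = 1 := Real.smoothTransition.one_of_one_le (by norm_num)
  have hdφ : ∀ t ∉ Ioo (1 / 3 : ℝ) (2 / 3), (d ∘ φ) t = x := by
    intro t ht
    rw [mem_Ioo, not_and_or, not_lt, not_lt] at ht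
    rcases ht with ht | ht
    · exact hd.eq_left _ (Real.smoothTransition.zero_of_nonpos (by linarith)).le
    · exact hd.eq_right _ (Real.smoothTransition.one_of_one_le (by linarith)).ge
  obtain ⟨k, hk⟩ := hper _ (contMDiff_comp_fract (hd.contMDiff.comp hφ.contMDiff) hdφ)
    fun t ↦ by simp only [Function.comp_apply, Int.fract_add_one]
  refine ⟨k, ?_⟩
  calc lineIntegral γ d = ∫ t in φ 0..φ 1, lineIntegrand γ d t := by rw [hφ0, hφ1]; rfl
    _ = lineIntegral γ (d ∘ φ) := (integral_lineIntegrand_comp hγ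
        (hd.contMDiff.of_le (by simp)) (hφ.of_le (by simp)) 0 1).symm
    _ = lineIntegral γ ((d ∘ φ) ∘ Int.fract) := by
        refine integral_congr_uIoo fun t ht ↦ (lineIntegrand_congr ?_).symm
        rw [uIoo_of_le zero_le_one] at ht
        exact eventually_of_mem (isOpen_Ioo.mem_nhds ht) fun s hs ↦
          congrArg (d ∘ φ) (Int.fract_eq_self.2 ⟨hs.1.le, hs.2⟩)
    _ = k := hk

theorem IsSmoothPath.exists_int_lineIntegral_sub {x y : M} (hγ : IsLocallyExact γ)
    (hper : HasIntegralPeriods γ) (h₁ : IsSmoothPath I x y c₁) (h₂ : IsSmoothPath I x y c₂) :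
    ∃ k : ℤ, lineIntegral γ c₁ - lineIntegral γ c₂ = k := by
  obtain ⟨k, hk⟩ := (h₁.trans h₂.symm).exists_int_lineIntegral_eq hγ hper
  rw [lineIntegral_trans hγ h₁ h₂.symm, lineIntegral_symm hγ h₂] at hk
  exact ⟨k, by rw [← hk, sub_eq_add_neg]⟩

theorem exists_isSmoothPath_of_convex [IsManifold I ∞ M] {x y : M} {s : Set E} (hs : Convex ℝ s)
    (hst : s ⊆ (extChartAt I x).target) (hxs : extChartAt I x x ∈ s)
    (hy : y ∈ (extChartAt I x).source) (hys : extChartAt I x y ∈ s) :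
    ∃ c : ℝ → M, IsSmoothPath I x y c ∧
      ∀ t, c t ∈ (extChartAt I x).source ∩ extChartAt I x ⁻¹' s := by
  set e := extChartAt I x
  set z : ℝ → E := fun t ↦ AffineMap.lineMap (e x) (e y) (Real.smoothTransition t)
  have hz (t : ℝ) : z t ∈ s := hs.segment_subset hxs hys <| lineMap_mem_segment ℝ _ _
    ⟨Real.smoothTransition.nonneg t, Real.smoothTransition.le_one t⟩
  refine ⟨e.symm ∘ z, ⟨?_, fun t ht ↦ ?_, fun t ht ↦ ?_⟩, fun t ↦ ?_⟩
  · exact (contMDiffOn_extChartAt_symm x).comp_contMDiff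
      ((AffineMap.contDiff_lineMap _ _).comp Real.smoothTransition.contDiff).contMDiff
      fun t ↦ hst (hz t)
  · simp only [Function.comp_apply, z, Real.smoothTransition.zero_of_nonpos ht,
      AffineMap.lineMap_apply_zero, e, extChartAt_to_inv]
  · simp only [Function.comp_apply, z, Real.smoothTransition.one_of_one_le ht,
      AffineMap.lineMap_apply_one, e.left_inv hy]
  · exact ⟨e.map_target (hst (hz t)), by
      simp only [mem_preimage, Function.comp_apply, e.right_inv (hst (hz t)), hz t]⟩

theorem exists_isOpen_forall_isSmoothPath [I.Boundaryless] [IsManifold I ∞ M] (x : M) {v : Set M}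
    (hv : v ∈ 𝓝 x) : ∃ u ⊆ v, IsOpen u ∧ x ∈ u ∧
      ∀ y ∈ u, ∃ c : ℝ → M, IsSmoothPath I x y c ∧ ∀ t, c t ∈ u := by
  set e := extChartAt I x
  obtain ⟨ε, hε, hball⟩ := Metric.mem_nhds_iff.1 <| inter_mem
    ((isOpen_extChartAt_target x).mem_nhds (mem_extChartAt_target x))
    (extChartAt_preimage_mem_nhds (I := I) hv)
  refine ⟨e.source ∩ e ⁻¹' Metric.ball (e x) ε, fun y hy ↦ ?_, ?_, ?_, fun y hy ↦ ?_⟩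
  · have hy' := (hball hy.2).2
    rwa [mem_preimage, e.left_inv hy.1] at hy'
  · exact (continuousOn_extChartAt x).isOpen_inter_preimage (isOpen_extChartAt_source x)
      Metric.isOpen_ball
  · exact ⟨mem_extChartAt_source x, Metric.mem_ball_self hε⟩
  · exact exists_isSmoothPath_of_convex (convex_ball _ _) (fun z hz ↦ (hball hz).1)
      (Metric.mem_ball_self hε) hy.1 hy.2

theorem exists_isSmoothPath_of_mem_connectedComponent [I.Boundaryless] [IsManifold I ∞ M]
    {x y : M} (h : y ∈ connectedComponent x) : ∃ c : ℝ → M, IsSmoothPath I x y c := by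
  set A := {y | ∃ c : ℝ → M, IsSmoothPath I x y c}
  have hA : ∀ z, ∀ᶠ w in 𝓝 z, (z ∈ A ↔ w ∈ A) := by
    intro z
    obtain ⟨u, -, hu, hzu, hpath⟩ := exists_isOpen_forall_isSmoothPath (I := I) z univ_mem
    filter_upwards [hu.mem_nhds hzu] with w hw
    obtain ⟨c, hc, -⟩ := hpath w hw
    exact ⟨fun ⟨c', hc'⟩ ↦ ⟨_, hc'.trans hc⟩, fun ⟨c', hc'⟩ ↦ ⟨_, hc'.trans hc.symm⟩⟩
  have hclopen : IsClopen A := by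
    refine ⟨isOpen_compl_iff.1 (isOpen_iff_mem_nhds.2 fun z hz ↦ ?_),
      isOpen_iff_mem_nhds.2 fun z hz ↦ ?_⟩
    · filter_upwards [hA z] with w hw using fun hwA ↦ hz (hw.2 hwA)
    · filter_upwards [hA z] with w hw using hw.1 hz
  exact hclopen.connectedComponent_subset ⟨_, IsSmoothPath.refl x⟩ h

theorem IsSmoothPath.mem_connectedComponent {x y : M} (h : IsSmoothPath I x y c) :
    y ∈ connectedComponent x :=
  (isPreconnected_Icc.image c h.contMDiff.continuous.continuousOn).subset_connectedComponent
    ⟨0, left_mem_Icc.2 zero_le_one, h.eq_left 0 le_rfl⟩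
    ⟨1, right_mem_Icc.2 zero_le_one, h.eq_right 1 le_rfl⟩

theorem mfderiv_circleExp_apply_one_ne_zero (t : ℝ) :
    mfderiv 𝓘(ℝ, ℝ) (𝓡 1) Circle.exp t 1 ≠ 0 := by
  -- needed for the manifold structure on the unit sphere of `ℂ`
  have := finrank_real_complex_fact'
  have hcoe : MDifferentiableAt (𝓡 1) 𝓘(ℝ, ℂ) (fun z : Circle ↦ (z : ℂ)) (Circle.exp t) :=
    (contMDiff_coe_sphere (n := 1) _).mdifferentiableAt one_ne_zero
  have hexp : MDifferentiableAt 𝓘(ℝ, ℝ) (𝓡 1) Circle.exp t :=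
    (contMDiff_circleExp (m := 1) t).mdifferentiableAt one_ne_zero
  have hcircleMap : mfderiv 𝓘(ℝ, ℝ) 𝓘(ℝ, ℂ) (circleMap 0 1) t 1 = circleMap 0 1 t * Complex.I := by
    rw [mfderiv_eq_fderiv, ← (hasDerivAt_circleMap 0 1 t).deriv]
    rfl
  have hcomp : (fun z : Circle ↦ (z : ℂ)) ∘ Circle.exp = circleMap 0 1 := by
    funext s
    simp [circleMap]
  intro h0
  have h := mfderiv_comp t hcoe hexp
  rw [hcomp] at h
  rw [h] at hcircleMap
  change mfderiv (𝓡 1) 𝓘(ℝ, ℂ) (fun z : Circle ↦ (z : ℂ)) (Circle.exp t)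
    (mfderiv 𝓘(ℝ, ℝ) (𝓡 1) Circle.exp t 1) = _ at hcircleMap
  rw [h0, map_zero] at hcircleMap
  exact mul_ne_zero (by simp [circleMap, Complex.exp_ne_zero]) Complex.I_ne_zero hcircleMap.symm

theorem mfderiv_circleExp_surjective (t : ℝ) :
    Function.Surjective (mfderiv 𝓘(ℝ, ℝ) (𝓡 1) Circle.exp t) := by
  intro w
  obtain ⟨a, ha⟩ := (finrank_eq_one_iff_of_nonzero' _ (mfderiv_circleExp_apply_one_ne_zero t)).1
    finrank_euclideanSpace_fin w
  refine ⟨a, ?_⟩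
  rw [← ha, ← map_smul]
  exact congrArg _ (mul_one a).symm

def IsCircleValuedPrimitive (γ : ∀ x : M, TangentSpace I x →L[ℝ] ℝ) (f : M → Circle) : Prop :=
  ∀ x₀ : M, ∃ u ∈ 𝓝 x₀, ∃ g : M → ℝ, ContMDiffOn I 𝓘(ℝ, ℝ) ∞ g u ∧
    (∀ x ∈ u, f x = Circle.exp (2 * Real.pi * g x)) ∧
    ∀ x ∈ u, (mfderiv I 𝓘(ℝ, ℝ) g x : TangentSpace I x →L[ℝ] ℝ) = γ x

namespace IsCircleValuedPrimitive

variable {f : M → Circle}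

theorem contMDiff (hf : IsCircleValuedPrimitive γ f) : ContMDiff I (𝓡 1) ∞ f := by
  intro x
  obtain ⟨u, hu, g, hg, hfg, -⟩ := hf x
  exact (contMDiff_circleExp.contMDiffAt.comp x (contMDiffAt_const.mul (hg.contMDiffAt hu)))
    |>.congr_of_eventuallyEq (eventually_of_mem hu hfg)

theorem mfderiv_surjective (hf : IsCircleValuedPrimitive γ f) (hγ : ∀ x, γ x ≠ 0) (x : M) :
    Function.Surjective (mfderiv I (𝓡 1) f x) := by
  obtain ⟨u, hu, g, hg, hfg, hgγ⟩ := hf x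
  have hgx : MDifferentiableAt I 𝓘(ℝ, ℝ) g x := (hg.contMDiffAt hu).mdifferentiableAt (by simp)
  have hexp : MDifferentiableAt 𝓘(ℝ, ℝ) (𝓡 1) Circle.exp (2 * Real.pi * g x) :=
    (contMDiff_circleExp (m := 1) _).mdifferentiableAt one_ne_zero
  have hcomp : mfderiv I (𝓡 1) (Circle.exp ∘ ((2 * Real.pi) • g)) x =
      (mfderiv 𝓘(ℝ, ℝ) (𝓡 1) Circle.exp (2 * Real.pi * g x)).comp ((2 * Real.pi) • γ x) := by
    rw [mfderiv_comp x hexp (hgx.const_smul _), const_smul_mfderiv hgx, hgγ x (mem_of_mem_nhds hu)]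
    rfl
  have hγx : Function.Surjective ((2 * Real.pi) • γ x) :=
    surjective_of_nonzero_of_finrank_eq_one (f := ((2 * Real.pi) • γ x).toLinearMap)
      (Module.finrank_self ℝ) fun h ↦ smul_ne_zero (by positivity) (hγ x)
        (ContinuousLinearMap.coe_injective h)
  have hev : f =ᶠ[𝓝 x] Circle.exp ∘ ((2 * Real.pi) • g) := eventually_of_mem hu hfg
  rw [hev.mfderiv_eq]
  exact hcomp ▸ (mfderiv_circleExp_surjective _).comp hγx

end IsCircleValuedPrimitive

section Construction

variable [I.Boundaryless] [IsManifold I ∞ M]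

theorem mem_connectedComponent_out (x : M) :
    x ∈ connectedComponent (ConnectedComponents.mk x).out :=
  ConnectedComponents.coe_eq_coe'.1 (Quotient.out_eq _).symm

def pathFromBase (I : ModelWithCorners ℝ E H) [I.Boundaryless] [IsManifold I ∞ M] (x : M) : ℝ → M :=
  (exists_isSmoothPath_of_mem_connectedComponent (I := I) (mem_connectedComponent_out x)).choose

theorem isSmoothPath_pathFromBase (x : M) :
    IsSmoothPath I (ConnectedComponents.mk x).out x (pathFromBase I x) :=
  (exists_isSmoothPath_of_mem_connectedComponent (mem_connectedComponent_out x)).choose_spec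

def circlePrimitive (γ : ∀ x : M, TangentSpace I x →L[ℝ] ℝ) (x : M) : Circle :=
  Circle.exp (2 * Real.pi * lineIntegral γ (pathFromBase I x))

theorem isCircleValuedPrimitive_circlePrimitive (hγ : IsLocallyExact γ)
    (hper : HasIntegralPeriods γ) : IsCircleValuedPrimitive γ (circlePrimitive γ) := by
  intro x₀
  obtain ⟨v, hv, g, hg, hgγ⟩ := hγ x₀
  obtain ⟨u, huv, hu, hx₀u, hpath⟩ := exists_isOpen_forall_isSmoothPath (I := I) x₀ hv
  set C := lineIntegral γ (pathFromBase I x₀) - g x₀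
  refine ⟨u, hu.mem_nhds hx₀u, fun x ↦ C + g x, contMDiffOn_const.add (hg.mono huv),
    fun y hy ↦ ?_, fun y hy ↦ ?_⟩
  · obtain ⟨σ, hσ, hσu⟩ := hpath y hy
    have hbase : (ConnectedComponents.mk y).out = (ConnectedComponents.mk x₀).out := by
      rw [ConnectedComponents.coe_eq_coe'.2 hσ.mem_connectedComponent]
    have hσg : lineIntegral γ σ = g y - g x₀ := by
      have := integral_lineIntegrand_eq_sub hγ hu ((hg.mono huv).of_le (by simp))
        (fun x hx ↦ hgγ x (huv hx)) (hσ.contMDiff.of_le (by simp)) (a := 0) (b := 1)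
        fun t _ ↦ hσu t
      rwa [hσ.eq_left 0 le_rfl, hσ.eq_right 1 le_rfl] at this
    obtain ⟨k, hk⟩ := ((isSmoothPath_pathFromBase x₀).trans hσ).exists_int_lineIntegral_sub hγ hper
      (hbase ▸ isSmoothPath_pathFromBase y)
    rw [(isSmoothPath_pathFromBase x₀).lineIntegral_trans hγ hσ, hσg] at hk
    refine Circle.exp_eq_exp.2 ⟨-k, ?_⟩
    push_cast
    linear_combination (-2 * Real.pi) * hk
  · have hgy : HasMFDerivAt I 𝓘(ℝ, ℝ) g y (mfderiv I 𝓘(ℝ, ℝ) g y) :=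
      ((hg.contMDiffAt (mem_of_superset (hu.mem_nhds hy) huv)).mdifferentiableAt
        (by simp)).hasMFDerivAt
    exact (((hasMFDerivAt_const C y).add hgy).congr_mfderiv (zero_add _)).mfderiv.trans
      (hgγ y (huv hy))

end Construction

end Tischler

open Tischler

theorem statement19_general {m : ℕ} {M : Type} [TopologicalSpace M]
    [ChartedSpace (EuclideanSpace ℝ (Fin m)) M] [IsManifold (𝓡 m) (⊤ : ℕ∞) M]
    (γ : ∀ x : M, TangentSpace (𝓡 m) x →L[ℝ] ℝ)
    -- γ is a closed (smooth) 1-form: it is locally the differential of a smooth function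
    (hclosed : ∀ x₀ : M, ∃ u ∈ nhds x₀, ∃ g : M → ℝ, ContMDiffOn (𝓡 m) 𝓘(ℝ, ℝ) (⊤ : ℕ∞) g u ∧
      ∀ x ∈ u, (mfderiv (𝓡 m) 𝓘(ℝ, ℝ) g x : TangentSpace (𝓡 m) x →L[ℝ] ℝ) = γ x)
    -- γ is nowhere vanishing
    (hnv : ∀ x : M, γ x ≠ 0)
    -- the de Rham class of γ is integral: all periods over smooth loops are integers
    (hint : ∀ c : ℝ → M, ContMDiff 𝓘(ℝ, ℝ) (𝓡 m) (⊤ : ℕ∞) c → (∀ t : ℝ, c (t + 1) = c t) →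
      ∃ k : ℤ, (∫ t in (0:ℝ)..1, γ (c t) (mfderiv 𝓘(ℝ, ℝ) (𝓡 m) c t (1 : ℝ))) = k) :
    ∃ f : M → Circle, ContMDiff (𝓡 m) (𝓡 1) (⊤ : ℕ∞) f ∧
      (∀ x : M, Function.Surjective (mfderiv (𝓡 m) (𝓡 1) f x)) ∧
      ∀ x₀ : M, ∃ u ∈ nhds x₀, ∃ g : M → ℝ, ContMDiffOn (𝓡 m) 𝓘(ℝ, ℝ) (⊤ : ℕ∞) g u ∧
        (∀ x ∈ u, f x = Circle.exp (2 * Real.pi * g x)) ∧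
        ∀ x ∈ u, (mfderiv (𝓡 m) 𝓘(ℝ, ℝ) g x : TangentSpace (𝓡 m) x →L[ℝ] ℝ) = γ x := by
  have hf := isCircleValuedPrimitive_circlePrimitive hclosed hint
  exact ⟨circlePrimitive γ, hf.contMDiff, hf.mfderiv_surjective hnv, hf⟩

/-- **Statement 19 (Tischler-type theorem).** Let `M` be a compact smooth manifold and
`γ` a closed `1`-form on `M` (given as a smooth family of cotangent vectors; closedness
is expressed by local exactness: around every point `γ` is the differential of a smooth
function) which is nowhere vanishing and whose de Rham class is integral (all its periods
over smooth loops are integers).  Then there exists a submersion `f : M → S¹` with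
`f^*(dt) = γ`, where `dt` is the canonical (period-one) `1`-form on `S¹`; pulling back
`dt` is expressed through local lifts: locally `f = exp(2πi g)` with `dg = γ`. -/
theorem statement19 {m : ℕ} {M : Type} [TopologicalSpace M]
    [ChartedSpace (EuclideanSpace ℝ (Fin m)) M] [IsManifold (𝓡 m) (⊤ : ℕ∞) M]
    [CompactSpace M]
    (γ : ∀ x : M, TangentSpace (𝓡 m) x →L[ℝ] ℝ)
    -- γ is a closed (smooth) 1-form: it is locally the differential of a smooth function
    (hclosed : ∀ x₀ : M, ∃ u ∈ nhds x₀, ∃ g : M → ℝ, ContMDiffOn (𝓡 m) 𝓘(ℝ, ℝ) (⊤ : ℕ∞) g u ∧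
      ∀ x ∈ u, (mfderiv (𝓡 m) 𝓘(ℝ, ℝ) g x : TangentSpace (𝓡 m) x →L[ℝ] ℝ) = γ x)
    -- γ is nowhere vanishing
    (hnv : ∀ x : M, γ x ≠ 0)
    -- the de Rham class of γ is integral: all periods over smooth loops are integers
    (hint : ∀ c : ℝ → M, ContMDiff 𝓘(ℝ, ℝ) (𝓡 m) (⊤ : ℕ∞) c → (∀ t : ℝ, c (t + 1) = c t) →
      ∃ k : ℤ, (∫ t in (0:ℝ)..1, γ (c t) (mfderiv 𝓘(ℝ, ℝ) (𝓡 m) c t (1 : ℝ))) = k) :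
    ∃ f : M → Circle, ContMDiff (𝓡 m) (𝓡 1) (⊤ : ℕ∞) f ∧
      (∀ x : M, Function.Surjective (mfderiv (𝓡 m) (𝓡 1) f x)) ∧
      ∀ x₀ : M, ∃ u ∈ nhds x₀, ∃ g : M → ℝ, ContMDiffOn (𝓡 m) 𝓘(ℝ, ℝ) (⊤ : ℕ∞) g u ∧
        (∀ x ∈ u, f x = Circle.exp (2 * Real.pi * g x)) ∧
        ∀ x ∈ u, (mfderiv (𝓡 m) 𝓘(ℝ, ℝ) g x : TangentSpace (𝓡 m) x →L[ℝ] ℝ) = γ x :=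
  statement19_general γ hclosed hnv hint
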